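/- Suppose J : H → H is Lipschitz continuous and that the map T̃ : D → D, d ↦ C*(J(C d)), is ℝ-linear and firmly nonexpansive. Let λ ∈ (0,2) be a constant, let u0 ∈ H, set w0 := C* u0, and define u_{k+1} := (1 − λ)·u_k + λ·T(u_k), where T := J ∘ M and M := C ∘ C*. Then Fix T̃ = ker(T̃ − Id) is a closed linear subspace of D, and both sequences (T(u_k)) and (u_k) converge strongly (in norm) to u* := J(C(P w0)), where P is the orthogonal projection of D onto Fix T̃. -/

import Mathlib

/-!
Since `T̃` is linear and firmly nonexpansive, its relaxation `S = (1 - λ) Id + λ T̃`, `λ ∈ (0, 2)`,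
satisfies `‖S d‖² + (2 - λ) λ ‖T̃ d - d‖² ≤ ‖d‖²`. Hence `‖S‖ ≤ 1`, and summing the inequality along
an orbit shows `S^[n+1] d - S^[n] d → 0`. For such an operator the iterates converge strongly to the
orthogonal projection onto `Fix S = Fix T̃`: they fix `Fix S` pointwise and telescope to zero on
`range (S - 1)`, hence, by equicontinuity, on its closure, which contains `(Fix S)ᗮ` because a
contraction and its adjoint have the same fixed points.

Applying `C*` to the recursion shows that `C* u_k` is the `S`-orbit of `w0`, so
`T u_k = J (C (C* u_k))` converges to `u*` by continuity of `J`. Finally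
`u_{k+1} - u* = (1 - λ) (u_k - u*) + λ (T u_k - u*)` with `|1 - λ| < 1` forces `u_k → u*`.
-/

open Filter Topology
open scoped RealInnerProductSpace

theorem tendsto_zero_of_add_le {a b : ℕ → ℝ} (ha : ∀ n, 0 ≤ a n) (hb : ∀ n, 0 ≤ b n)
    (h : ∀ n, a (n + 1) + b n ≤ a n) : Tendsto b atTop (𝓝 0) := by
  have hsum : ∀ n, ∑ i ∈ Finset.range n, b i + a n ≤ a 0 := by
    intro n
    induction n with
    | zero => simp
    | succ n ih => rw [Finset.sum_range_succ]; linarith [h n]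
  exact (summable_of_sum_range_le hb fun n => by linarith [hsum n, ha n]).tendsto_atTop_zero

theorem tendsto_zero_of_le_mul_add {a c : ℕ → ℝ} {r : ℝ} (hr0 : 0 ≤ r) (hr1 : r < 1)
    (ha : ∀ k, 0 ≤ a k) (h : ∀ k, a (k + 1) ≤ r * a k + c k) (hc : Tendsto c atTop (𝓝 0)) :
    Tendsto a atTop (𝓝 0) := by
  refine tendsto_order.2 ⟨fun ε hε => .of_forall fun k => hε.trans_le (ha k), fun ε hε => ?_⟩
  obtain ⟨N, hN⟩ := eventually_atTop.1 ((tendsto_order.1 hc).2 ((1 - r) * (ε / 2)) (by nlinarith))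
  have hcontract : ∀ m, a (N + m) - ε / 2 ≤ r ^ m * (a N - ε / 2) := by
    intro m
    induction m with
    | zero => simp
    | succ m ih =>
      calc a (N + (m + 1)) - ε / 2 ≤ r * (a (N + m) - ε / 2) := by
            rw [← add_assoc]
            linarith [h (N + m), hN (N + m) (Nat.le_add_right N m)]
        _ ≤ r * (r ^ m * (a N - ε / 2)) := mul_le_mul_of_nonneg_left ih hr0
        _ = r ^ (m + 1) * (a N - ε / 2) := by ring
  have hpow : Tendsto (fun m => r ^ m * (a N - ε / 2)) atTop (𝓝 0) := by
    simpa using (tendsto_pow_atTop_nhds_zero_of_lt_one hr0 hr1).mul_const (a N - ε / 2)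
  obtain ⟨M, hM⟩ := eventually_atTop.1 ((tendsto_order.1 hpow).2 (ε / 2) (by positivity))
  filter_upwards [eventually_ge_atTop (N + M)] with k hk
  obtain ⟨m, rfl⟩ := Nat.exists_eq_add_of_le (le_trans (Nat.le_add_right N M) hk)
  linarith [hcontract m, hM m (by omega)]

theorem tendsto_of_relaxed_recurrence {E : Type*} [SeminormedAddCommGroup E] [NormedSpace ℝ E]
    {x v : ℕ → E} {v₀ : E} {lam : ℝ} (hlam : lam ∈ Set.Ioo (0 : ℝ) 2)
    (hx : ∀ k, x (k + 1) = (1 - lam) • x k + lam • v k) (hv : Tendsto v atTop (𝓝 v₀)) :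
    Tendsto x atTop (𝓝 v₀) := by
  rw [tendsto_iff_norm_sub_tendsto_zero] at hv ⊢
  refine tendsto_zero_of_le_mul_add (c := fun k => |lam| * ‖v k - v₀‖) (abs_nonneg (1 - lam))
    (abs_lt.2 ⟨by linarith [hlam.2], by linarith [hlam.1]⟩) (fun k => norm_nonneg _) (fun k => ?_)
    (by simpa using hv.const_mul |lam|)
  calc ‖x (k + 1) - v₀‖ = ‖(1 - lam) • (x k - v₀) + lam • (v k - v₀)‖ := by
        rw [hx k]; congr 1; module
    _ ≤ |1 - lam| * ‖x k - v₀‖ + |lam| * ‖v k - v₀‖ := by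
        simpa only [norm_smul, Real.norm_eq_abs] using
          norm_add_le ((1 - lam) • (x k - v₀)) (lam • (v k - v₀))

section Relaxation

variable {E : Type*} [NormedAddCommGroup E] [InnerProductSpace ℝ E]

theorem norm_relaxation_sq_add_le {x y : E} {lam : ℝ} (hlam : 0 ≤ lam) (hy : ‖y‖ ^ 2 ≤ ⟪x, y⟫) :
    ‖(1 - lam) • x + lam • y‖ ^ 2 + (2 - lam) * lam * ‖y - x‖ ^ 2 ≤ ‖x‖ ^ 2 := by
  have hexpand : ‖(1 - lam) • x + lam • y‖ ^ 2
      = ‖x‖ ^ 2 + 2 * lam * ⟪x, y - x⟫ + lam ^ 2 * ‖y - x‖ ^ 2 := by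
    rw [show (1 - lam) • x + lam • y = x + lam • (y - x) by module, norm_add_sq_real,
      real_inner_smul_right, norm_smul, Real.norm_eq_abs, mul_pow, sq_abs]
    ring
  have hfirm : ‖y - x‖ ^ 2 ≤ -⟪x, y - x⟫ := by
    rw [norm_sub_sq_real, inner_sub_right, real_inner_self_eq_norm_sq, real_inner_comm]
    linarith
  rw [hexpand]
  nlinarith [mul_le_mul_of_nonneg_left hfirm hlam]

def relaxation (T : E →L[ℝ] E) (lam : ℝ) : E →L[ℝ] E := (1 - lam) • 1 + lam • T

@[simp]
theorem relaxation_apply (T : E →L[ℝ] E) (lam : ℝ) (x : E) :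
    relaxation T lam x = (1 - lam) • x + lam • T x := rfl

theorem relaxation_sub_one (T : E →L[ℝ] E) (lam : ℝ) : relaxation T lam - 1 = lam • (T - 1) := by
  ext x
  simp only [sub_apply, relaxation_apply, one_apply_eq_self, smul_apply]
  module

theorem ker_relaxation_sub_one (T : E →L[ℝ] E) {lam : ℝ} (hlam : lam ≠ 0) :
    LinearMap.ker ((relaxation T lam - 1 : E →L[ℝ] E) : E →ₗ[ℝ] E)
      = LinearMap.ker ((T - 1 : E →L[ℝ] E) : E →ₗ[ℝ] E) := by
  rw [relaxation_sub_one, ContinuousLinearMap.toLinearMap_smul, LinearMap.ker_smul _ _ hlam]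

variable {T : E →L[ℝ] E} {lam : ℝ}

theorem norm_relaxation_le_one (hT : ∀ x, ‖T x‖ ^ 2 ≤ ⟪x, T x⟫) (hlam : lam ∈ Set.Icc (0 : ℝ) 2) :
    ‖relaxation T lam‖ ≤ 1 := by
  refine (relaxation T lam).opNorm_le_bound zero_le_one fun x => ?_
  have h := norm_relaxation_sq_add_le hlam.1 (hT x)
  have : 0 ≤ (2 - lam) * lam * ‖T x - x‖ ^ 2 :=
    mul_nonneg (mul_nonneg (by linarith [hlam.2]) hlam.1) (sq_nonneg _)
  rw [one_mul, relaxation_apply]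
  exact (sq_le_sq₀ (norm_nonneg _) (norm_nonneg _)).1 (by linarith)

theorem tendsto_relaxation_iterate_succ_sub (hT : ∀ x, ‖T x‖ ^ 2 ≤ ⟪x, T x⟫)
    (hlam : lam ∈ Set.Ioo (0 : ℝ) 2) (x : E) :
    Tendsto (fun n => (relaxation T lam)^[n + 1] x - (relaxation T lam)^[n] x) atTop (𝓝 0) := by
  set y : ℕ → E := fun n => (relaxation T lam)^[n] x
  have hstep : ∀ n, (relaxation T lam)^[n + 1] x = (1 - lam) • y n + lam • T (y n) := fun n => by
    rw [Function.iterate_succ_apply', relaxation_apply]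
  have hc : 0 < (2 - lam) * lam := mul_pos (by linarith [hlam.2]) hlam.1
  have hweighted : Tendsto (fun n => (2 - lam) * lam * ‖T (y n) - y n‖ ^ 2) atTop (𝓝 0) :=
    tendsto_zero_of_add_le (a := fun n => ‖y n‖ ^ 2) (fun n => sq_nonneg _)
      (fun n => by positivity) fun n => by
        simpa only [y, hstep] using norm_relaxation_sq_add_le hlam.1.le (hT (y n))
  have hresidual : Tendsto (fun n => T (y n) - y n) atTop (𝓝 0) := by
    have hsq : Tendsto (fun n => ‖T (y n) - y n‖ ^ 2) atTop (𝓝 0) := by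
      simpa using (hweighted.const_mul ((2 - lam) * lam)⁻¹).congr fun n => by
        rw [inv_mul_cancel_left₀ hc.ne']
    rw [tendsto_zero_iff_norm_tendsto_zero]
    simpa [Real.sqrt_sq (norm_nonneg _)] using hsq.sqrt
  have hdiff : ∀ n, (relaxation T lam)^[n + 1] x - y n = lam • (T (y n) - y n) := fun n => by
    rw [hstep]; module
  have := hresidual.const_smul lam
  rw [smul_zero] at this
  exact this.congr fun n => (hdiff n).symm

end Relaxation

-- `rw` cannot replace `K` by `L` under `orthogonalProjectionOnto`, whose instance argument depends
-- on `K`.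
theorem Submodule.coe_orthogonalProjectionOnto_congr {𝕜 E : Type*} [RCLike 𝕜] [NormedAddCommGroup E]
    [InnerProductSpace 𝕜 E] {K L : Submodule 𝕜 E} [K.HasOrthogonalProjection]
    [L.HasOrthogonalProjection] (h : K = L) (x : E) :
    (K.orthogonalProjectionOnto x : E) = L.orthogonalProjectionOnto x := by
  subst h
  rfl

namespace ContinuousLinearMap

variable {𝕜 E : Type*} [RCLike 𝕜] [NormedAddCommGroup E] [InnerProductSpace 𝕜 E] [CompleteSpace E]

theorem orthogonal_ker_sub_one_le_closure_range (f : E →L[𝕜] E) (hf : ‖f‖ ≤ 1) :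
    (LinearMap.ker ((f - 1 : E →L[𝕜] E) : E →ₗ[𝕜] E))ᗮ
      ≤ (LinearMap.range ((f - 1 : E →L[𝕜] E) : E →ₗ[𝕜] E)).topologicalClosure := by
  rw [← Submodule.orthogonal_orthogonal_eq_closure]
  refine Submodule.orthogonal_le fun x hx => ?_
  rw [LinearMap.mem_ker, coe_coe, sub_apply, one_apply_eq_self, sub_eq_zero]
  -- `x ⟂ range (f - 1)` gives `⟪f x, x⟫ = ‖x‖²`, which together with `‖f x‖ ≤ ‖x‖` forces `f x = x`
  have hinner : ∀ y, inner 𝕜 (f y) x = inner 𝕜 y x := by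
    simpa [Submodule.mem_orthogonal, inner_sub_left, sub_eq_zero] using hx
  refine eq_of_norm_le_re_inner_eq_norm_sq (𝕜 := 𝕜) ?_ ?_
  · simpa using f.le_of_opNorm_le hf x
  · simp [hinner]

theorem tendsto_iterate_orthogonalProjection (f : E →L[𝕜] E) (hf : ‖f‖ ≤ 1)
    (hreg : ∀ x, Tendsto (fun n => f^[n + 1] x - f^[n] x) atTop (𝓝 0)) (x : E) :
    Tendsto (fun n => f^[n] x) atTop
      (𝓝 ((LinearMap.ker ((f - 1 : E →L[𝕜] E) : E →ₗ[𝕜] E)).orthogonalProjectionOnto x : E)) := by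
  set K := LinearMap.ker ((f - 1 : E →L[𝕜] E) : E →ₗ[𝕜] E)
  have hclosed : IsClosed {y : E | Tendsto (fun n => f^[n] y) atTop (𝓝 0)} := by
    have hlip : LipschitzWith 1 f := f.lipschitz.weaken (by exact_mod_cast hf)
    refine (LipschitzWith.uniformEquicontinuous _ 1 fun n => ?_).equicontinuous
      |>.isClosed_setOfPred_tendsto continuous_const
    simpa using hlip.iterate n
  have hrange : closure (LinearMap.range ((f - 1 : E →L[𝕜] E) : E →ₗ[𝕜] E) : Set E)
      ⊆ {y : E | Tendsto (fun n => f^[n] y) atTop (𝓝 0)} := by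
    refine closure_minimal (Set.forall_mem_range.2 fun w => ?_) hclosed
    have hstep : ∀ n, f^[n] ((f - 1 : E →L[𝕜] E) w) = f^[n + 1] w - f^[n] w := fun n => by
      rw [sub_apply, one_apply_eq_self, iterate_map_sub, Function.iterate_succ_apply]
    simpa only [Set.mem_ofPred_eq, coe_coe, hstep] using hreg w
  set p : E := (K.orthogonalProjectionOnto x : E)
  have hp : ∀ n, f^[n] p = p := by
    refine Function.iterate_fixed ?_
    have := (K.orthogonalProjectionOnto x).2
    rwa [LinearMap.mem_ker, coe_coe, sub_apply, one_apply_eq_self, sub_eq_zero] at this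
  have hxp : x - p ∈ closure (LinearMap.range ((f - 1 : E →L[𝕜] E) : E →ₗ[𝕜] E) : Set E) := by
    rw [← Submodule.topologicalClosure_coe]
    exact orthogonal_ker_sub_one_le_closure_range f hf (K.sub_starProjection_mem_orthogonal x)
  simpa [iterate_map_sub, hp] using (hrange hxp).add_const p

end ContinuousLinearMap

/-- Strong convergence of the PPP sequence when the reduced operator `T̃ = C* ∘ J ∘ C` is
linear and firmly nonexpansive and `J` is Lipschitz: both `(T u_k)` and `(u_k)` converge in
norm to `u* = J (C (P (C* u0)))`, where `P` is the orthogonal projection onto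
`Fix T̃ = ker (T̃ - Id)`. -/
theorem stmt_10
    {H D : Type*} [NormedAddCommGroup H] [InnerProductSpace ℝ H] [CompleteSpace H]
    [NormedAddCommGroup D] [InnerProductSpace ℝ D] [CompleteSpace D]
    (C : D →L[ℝ] H) (J : H → H)
    (hJ : ∃ K : NNReal, LipschitzWith K J)
    (Tt : D →L[ℝ] D)
    (hTt : ∀ d : D, Tt d = ContinuousLinearMap.adjoint C (J (C d)))
    (hfne : ∀ v w : D, ‖Tt v - Tt w‖ ^ 2 ≤ ⟪v - w, Tt v - Tt w⟫)
    (lam : ℝ) (hlam : lam ∈ Set.Ioo (0 : ℝ) 2)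
    (u0 : H) (u : ℕ → H) (hu0 : u 0 = u0)
    (hrec : ∀ k, u (k + 1)
      = (1 - lam) • u k + lam • J (C (ContinuousLinearMap.adjoint C (u k)))) :
    {d : D | Tt d = d} = (LinearMap.ker ((Tt - ContinuousLinearMap.id ℝ D : D →L[ℝ] D) : D →ₗ[ℝ] D) : Set D) ∧
      IsClosed ((LinearMap.ker ((Tt - ContinuousLinearMap.id ℝ D : D →L[ℝ] D) : D →ₗ[ℝ] D) : Submodule ℝ D) : Set D) ∧
      Filter.Tendsto (fun k => J (C (ContinuousLinearMap.adjoint C (u k)))) Filter.atTop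
        (nhds (J (C (Submodule.orthogonalProjectionOnto (LinearMap.ker ((Tt - ContinuousLinearMap.id ℝ D : D →L[ℝ] D) : D →ₗ[ℝ] D))
          (ContinuousLinearMap.adjoint C u0) : D)))) ∧
      Filter.Tendsto u Filter.atTop
        (nhds (J (C (Submodule.orthogonalProjectionOnto (LinearMap.ker ((Tt - ContinuousLinearMap.id ℝ D : D →L[ℝ] D) : D →ₗ[ℝ] D))
          (ContinuousLinearMap.adjoint C u0) : D)))) := by
  have hTt_firm : ∀ d, ‖Tt d‖ ^ 2 ≤ ⟪d, Tt d⟫ := fun d => by simpa using hfne d 0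
  have hw : ∀ k, C.adjoint (u k) = (relaxation Tt lam)^[k] (C.adjoint u0) := by
    intro k
    induction k with
    | zero => rw [hu0, Function.iterate_zero_apply]
    | succ k ih =>
      rw [Function.iterate_succ_apply', ← ih, hrec, map_add, map_smul, map_smul, ← hTt,
        relaxation_apply]
  set Fix := LinearMap.ker ((Tt - ContinuousLinearMap.id ℝ D : D →L[ℝ] D) : D →ₗ[ℝ] D)
  have hwlim : Tendsto (fun k => C.adjoint (u k)) atTop
      (𝓝 (Fix.orthogonalProjectionOnto (C.adjoint u0) : D)) := by
    rw [Submodule.coe_orthogonalProjectionOnto_congr (K := Fix)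
      (ker_relaxation_sub_one Tt hlam.1.ne').symm]
    simpa only [hw] using
      ContinuousLinearMap.tendsto_iterate_orthogonalProjection (relaxation Tt lam)
      (norm_relaxation_le_one hTt_firm (Set.Ioo_subset_Icc_self hlam))
      (tendsto_relaxation_iterate_succ_sub hTt_firm hlam) (C.adjoint u0)
  obtain ⟨K, hJK⟩ := hJ
  have hTu := ((hJK.continuous.comp C.continuous).tendsto _).comp hwlim
  refine ⟨?_, ContinuousLinearMap.isClosed_ker _, hTu, tendsto_of_relaxed_recurrence hlam hrec hTu⟩
  ext d
  simp [sub_eq_zero]
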